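/- Let n = 2p be even. There exist polynomials P_0, …, P_{p-1} (independent of the spherical variables) such that for all rζ ∈ B_n and ξ ∈ S^{n-1}, P_h(rζ, ξ) = Σ_{k=0}^{p-1} P_k(r) (1-r^2)^k (∂^k/∂r^k) P_e(rζ, ξ), where P_h(rζ,ξ) = ((1-r^2)/(1+r^2-2r⟨ζ,ξ⟩))^{n-1} is the hyperbolic Poisson kernel and P_e(rζ,ξ) = (1-r^2)/(1+r^2-2r⟨ζ,ξ⟩)^{n/2} is the Euclidean Poisson kernel. -/

import Mathlib

noncomputable section

/-- The hyperbolic Poisson kernel as a function of r and t = ⟨ζ,ξ⟩. -/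
def Ph (n : ℕ) (r t : ℝ) : ℝ := ((1 - r ^ 2) / (1 + r ^ 2 - 2 * r * t)) ^ (n - 1)

/-- The Euclidean Poisson kernel as a function of r and t = ⟨ζ,ξ⟩ (n = 2p even). -/
def Pe (p : ℕ) (r t : ℝ) : ℝ := (1 - r ^ 2) / (1 + r ^ 2 - 2 * r * t) ^ p

/-!
Write `S = 1 - r²`, `D = 1 + r² - 2rt` and `h_{m,b} = S^m / D^b`, so that `P_e = h_{1,p}` and
`P_h = h_{2p-1,2p-1}`. Since `r (2r - 2t) = D - S`, a direct computation gives
`(b S + 2m r²) h_{m,b} + r S ∂_r h_{m,b} = b h_{m+2,b+1}`. The operator `g ↦ S ∂_r g` maps a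
combination `∑_{k ≤ j} A_k(r) S^k ∂_r^k P_e` with polynomial coefficients `A_k` to one with
`k ≤ j + 1`, so by induction `h_{2j+1,p+j}` is such a combination with `k ≤ j`; at `j = p - 1` this
is the theorem. The coefficients never involve `t`.
-/

open Polynomial Finset Set
open scoped ContDiff

/-- The coefficients `A k` are chosen before the parameter `i`; with `i = ⟨ζ, ξ⟩` this makes them
independent of the spherical variables. -/
def IsPolyDerivCombOn {ι : Type*} (f : ι → ℝ → ℝ) (w : ℝ[X]) (U : ι → Set ℝ) (j : ℕ)
    (g : ι → ℝ → ℝ) : Prop :=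
  ∃ A : ℕ → ℝ[X], ∀ i, ∀ r ∈ U i,
    g i r = ∑ k ∈ range (j + 1), (A k).eval r * w.eval r ^ k * iteratedDeriv k (f i) r

namespace IsPolyDerivCombOn

variable {ι : Type*} {f g h : ι → ℝ → ℝ} {w : ℝ[X]} {U : ι → Set ℝ} {j : ℕ}

theorem self : IsPolyDerivCombOn f w U 0 f :=
  ⟨fun _ => 1, fun _ _ _ => by simp⟩

theorem congr (hg : IsPolyDerivCombOn f w U j g) (hgh : ∀ i, EqOn (g i) (h i) (U i)) :
    IsPolyDerivCombOn f w U j h := by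
  obtain ⟨A, hA⟩ := hg
  exact ⟨A, fun i r hr => (hgh i hr).symm.trans (hA i r hr)⟩

theorem add (hg : IsPolyDerivCombOn f w U j g) (hh : IsPolyDerivCombOn f w U j h) :
    IsPolyDerivCombOn f w U j (g + h) := by
  obtain ⟨A, hA⟩ := hg
  obtain ⟨B, hB⟩ := hh
  exact ⟨A + B, fun i r hr => by simp [hA i r hr, hB i r hr, add_mul, sum_add_distrib]⟩

theorem polynomial_mul (a : ℝ[X]) (hg : IsPolyDerivCombOn f w U j g) :
    IsPolyDerivCombOn f w U j (fun i r => a.eval r * g i r) := by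
  obtain ⟨A, hA⟩ := hg
  exact ⟨fun k => a * A k, fun i r hr => by simp [hA i r hr, mul_sum, mul_assoc]⟩

theorem mono {m : ℕ} (hg : IsPolyDerivCombOn f w U j g) (hjm : j ≤ m) :
    IsPolyDerivCombOn f w U m g := by
  obtain ⟨A, hA⟩ := hg
  refine ⟨fun k => if k ≤ j then A k else 0, fun i r hr => ?_⟩
  rw [hA i r hr, ← sum_subset (range_subset_range.mpr (by omega : j + 1 ≤ m + 1))]
  · exact sum_congr rfl fun k hk => by
      simp only [if_pos (Nat.lt_succ_iff.mp (mem_range.mp hk))]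
  · intro k _ hk
    simp only [if_neg (not_le.mpr (by simpa using hk)), eval_zero, zero_mul]

theorem shift (A : ℕ → ℝ[X]) :
    IsPolyDerivCombOn f w U (j + 1) fun i r =>
      ∑ k ∈ range (j + 1), (A k).eval r * w.eval r ^ (k + 1) * iteratedDeriv (k + 1) (f i) r :=
  ⟨fun k => if k = 0 then 0 else A (k - 1), fun i r _ => by simp [sum_range_succ' _ (j + 1)]⟩

theorem weight_mul_deriv (hU : ∀ i, IsOpen (U i)) (hf : ∀ i, ContDiffOn ℝ ∞ (f i) (U i))
    (hg : IsPolyDerivCombOn f w U j g) :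
    IsPolyDerivCombOn f w U (j + 1) (fun i r => w.eval r * deriv (g i) r) := by
  obtain ⟨A, hA⟩ := hg
  set C : ℕ → ℝ[X] := fun k => derivative (A k) * w + k * A k * derivative w
  refine ((IsPolyDerivCombOn.mono ⟨C, fun _ _ _ => rfl⟩ j.le_succ).add (shift A)).congr
    fun i r hr => ?_
  have hdiff : ∀ k, DifferentiableAt ℝ (iteratedDeriv k (f i)) r := fun k =>
    (((hf i).differentiableOn_iteratedDerivWithin (by exact_mod_cast WithTop.coe_lt_top _)
      (hU i).uniqueDiffOn).congr fun x hx => (iteratedDerivWithin_of_isOpen (hU i) hx).symm)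
      |>.differentiableAt ((hU i).mem_nhds hr)
  have hterm : ∀ k ∈ range (j + 1), HasDerivAt
      (fun r => (A k).eval r * w.eval r ^ k * iteratedDeriv k (f i) r)
      (((derivative (A k)).eval r * w.eval r ^ k
          + (A k).eval r * (k * w.eval r ^ (k - 1) * (derivative w).eval r))
          * iteratedDeriv k (f i) r
        + (A k).eval r * w.eval r ^ k * iteratedDeriv (k + 1) (f i) r) r := by
    intro k _
    rw [iteratedDeriv_succ]
    exact (((A k).hasDerivAt r).fun_mul ((w.hasDerivAt r).fun_pow k)).fun_mul (hdiff k).hasDerivAt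
  have hg_eq : g i =ᶠ[nhds r] fun r =>
      ∑ k ∈ range (j + 1), (A k).eval r * w.eval r ^ k * iteratedDeriv k (f i) r :=
    Filter.eventuallyEq_of_mem ((hU i).mem_nhds hr) (hA i)
  simp only [Pi.add_apply, hg_eq.deriv_eq, (HasDerivAt.fun_sum hterm).deriv, mul_sum,
    ← sum_add_distrib]
  refine sum_congr rfl fun k _ => ?_
  rcases k with _ | k
  · simp only [C, CharP.cast_eq_zero, zero_mul, add_zero, eval_mul, pow_zero, mul_one, zero_add,
      pow_one, iteratedDeriv_zero, iteratedDeriv_one]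
    ring
  · simp only [C, eval_add, eval_mul, eval_natCast, Nat.add_sub_cancel]
    ring

end IsPolyDerivCombOn

def kernelPow (m b : ℕ) (t r : ℝ) : ℝ := (1 - r ^ 2) ^ m / (1 + r ^ 2 - 2 * r * t) ^ b

theorem kernelPow_step (m b : ℕ) {t r : ℝ} (hD : 1 + r ^ 2 - 2 * r * t ≠ 0) :
    (b * (1 - r ^ 2) + 2 * m * r ^ 2) * kernelPow m b t r
        + r * ((1 - r ^ 2) * deriv (kernelPow m b t) r) =
      b * kernelPow (m + 2) (b + 1) t r := by
  have hS : HasDerivAt (fun r => (1 - r ^ 2) ^ m) (m * (1 - r ^ 2) ^ (m - 1) * -(2 * r)) r := by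
    simpa using ((hasDerivAt_pow 2 r).const_sub 1).fun_pow m
  have hDb : HasDerivAt (fun r => (1 + r ^ 2 - 2 * r * t) ^ b)
      (b * (1 + r ^ 2 - 2 * r * t) ^ (b - 1) * (2 * r - 2 * t)) r :=
    ((((hasDerivAt_pow 2 r).const_add 1).fun_sub
      (((hasDerivAt_id' r).const_mul 2).mul_const t)).fun_pow b).congr_deriv (by norm_num)
  rw [show kernelPow m b t = fun r => (1 - r ^ 2) ^ m / (1 + r ^ 2 - 2 * r * t) ^ b from rfl,
    (hS.fun_div hDb (pow_ne_zero _ hD)).deriv]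
  simp only [kernelPow]
  have hd : ∀ k, (1 + r ^ 2 - r * 2 * t) ^ k ≠ 0 := fun k =>
    pow_ne_zero k (by rwa [mul_comm r 2])
  -- splitting off `m = 0` and `b = 0` removes the truncated exponents `m - 1` and `b - 1`
  rcases m with _ | m <;> rcases b with _ | b <;>
    simp only [Nat.add_sub_cancel, Nat.cast_zero, zero_mul, pow_zero] <;>
    field_simp <;>
    (try rw [div_eq_div_iff (pow_ne_zero _ (hd _)) (hd _)]) <;>
    ring

theorem isPolyDerivCombOn_kernelPow {p : ℕ} (hp : 0 < p) (j : ℕ) :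
    IsPolyDerivCombOn (fun t ρ => Pe p ρ t) (1 - X ^ 2)
      (fun t => {r | 1 + r ^ 2 - 2 * r * t ≠ 0}) j (fun t => kernelPow (2 * j + 1) (p + j) t) := by
  have hU : ∀ t : ℝ, IsOpen {r : ℝ | 1 + r ^ 2 - 2 * r * t ≠ 0} := fun t =>
    isOpen_ne_fun (by fun_prop) continuous_const
  have hf : ∀ t : ℝ, ContDiffOn ℝ ∞ (fun ρ => Pe p ρ t) {r | 1 + r ^ 2 - 2 * r * t ≠ 0} :=
    fun t => ContDiffOn.div (by fun_prop) (by fun_prop) fun x hx => pow_ne_zero _ hx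
  induction j with
  | zero => exact IsPolyDerivCombOn.self.congr fun t r _ => by simp [Pe, kernelPow]
  | succ j ih =>
    have hpj : ((p + j : ℕ) : ℝ) ≠ 0 := by positivity
    have hcomb := ((ih.polynomial_mul
        (C ((p + j : ℕ) : ℝ) * (1 - X ^ 2) + C (2 * (2 * j + 1 : ℕ) : ℝ) * X ^ 2)).mono
      j.le_succ).add ((ih.weight_mul_deriv hU hf).polynomial_mul X)
    refine (hcomb.polynomial_mul (C ((p + j : ℕ) : ℝ)⁻¹)).congr fun t r hr => ?_
    have hs := kernelPow_step (2 * j + 1) (p + j) hr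
    rw [show 2 * (j + 1) + 1 = 2 * j + 1 + 2 by ring, ← add_assoc]
    simp only [Pi.add_apply, eval_add, eval_mul, eval_C, eval_sub, eval_one, eval_pow, eval_X]
    rw [inv_mul_eq_iff_eq_mul₀ hpj]
    linear_combination hs

/-- In even dimension n = 2p, there are polynomials P_0, …, P_{p-1} such that
P_h(rζ,ξ) = Σ_k P_k(r)(1-r²)^k ∂^k/∂r^k P_e(rζ,ξ). -/
theorem stmt7 (p : ℕ) (hp : 2 ≤ p) :
    ∃ P : Fin p → Polynomial ℝ,
      ∀ r : ℝ, 0 ≤ r → r < 1 →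
        ∀ ζ ξ : EuclideanSpace ℝ (Fin (2 * p)), ‖ζ‖ = 1 → ‖ξ‖ = 1 →
          Ph (2 * p) r (inner ℝ ζ ξ) =
            ∑ k : Fin p, (P k).eval r * (1 - r ^ 2) ^ (k : ℕ) *
              iteratedDeriv (k : ℕ) (fun ρ => Pe p ρ (inner ℝ ζ ξ)) r := by
  obtain ⟨A, hA⟩ := isPolyDerivCombOn_kernelPow (p := p) (by omega) (p - 1)
  refine ⟨fun k => A k, fun r hr0 hr1 ζ ξ hζ hξ => ?_⟩
  have ht : inner ℝ ζ ξ ≤ 1 := by simpa [hζ, hξ] using real_inner_le_norm ζ ξ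
  have hD : 0 < 1 + r ^ 2 - 2 * r * inner ℝ ζ ξ := by
    nlinarith [mul_nonneg hr0 (sub_nonneg.mpr ht)]
  have h := hA (inner ℝ ζ ξ) r hD.ne'
  rw [show 2 * (p - 1) + 1 = 2 * p - 1 by omega, show p + (p - 1) = 2 * p - 1 by omega,
    show p - 1 + 1 = p by omega] at h
  rw [Ph, div_pow, Fin.sum_univ_eq_sum_range (fun k => (A k).eval r * (1 - r ^ 2) ^ k *
    iteratedDeriv k (fun ρ => Pe p ρ (inner ℝ ζ ξ)) r)]
  simpa [kernelPow] using h
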